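/- arXiv:2409.15222 — 4 statements merged into one kernel-verified Lean document; each statement's English description precedes it below -/
import Mathlib

section
/- For fixed β > 0, the function F^R(L) = √(β/2) · (1 − e^{−L√(2β)}) / sinh(L√(2β)) satisfies F^R(L) · e^{L√(2β)} → √(2β) as L → ∞; in particular F^R(L) ≈ e^{−L√(2β)}, meaning the ratio F^R(L)/e^{−L√(2β)} converges to a positive constant. -/
/-! With `x = L √(2β)`, the identity `(1 - e^{-x}) e^x / sinh x = 2 / (1 + e^{-x})` turns
`F^R(L) e^x` into `√(2β) / (1 + e^{-x})`, which tends to `√(2β)` as `e^{-x} → 0`. -/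

open Real Filter

open scoped Topology

lemma one_sub_exp_neg_div_sinh_mul_exp {x : ℝ} (hx : x ≠ 0) :
    (1 - exp (-x)) / sinh x * exp x = 2 / (1 + exp (-x)) := by
  have hsinh : exp x - exp (-x) ≠ 0 := by
    simpa [sinh_eq] using sinh_ne_zero.mpr hx
  have hexp : exp x * exp (-x) = 1 := by rw [← exp_add, add_neg_cancel, exp_zero]
  rw [sinh_eq]
  field_simp
  linear_combination -exp (-x) * hexp

lemma tendsto_one_sub_exp_neg_div_sinh_mul_exp :
    Tendsto (fun x : ℝ => (1 - exp (-x)) / sinh x * exp x) atTop (𝓝 2) := by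
  have hlim : Tendsto (fun x : ℝ => 2 / (1 + exp (-x))) atTop (𝓝 (2 / (1 + 0))) :=
    tendsto_const_nhds.div (tendsto_const_nhds.add tendsto_exp_neg_atTop_nhds_zero) (by norm_num)
  rw [add_zero, div_one] at hlim
  refine hlim.congr' ?_
  filter_upwards [eventually_ne_atTop 0] with x hx
  exact (one_sub_exp_neg_div_sinh_mul_exp hx).symm

lemma sqrt_div_two_mul_two {β : ℝ} : √(β / 2) * 2 = √(2 * β) := by
  rw [show 2 * β = 2 ^ 2 * (β / 2) by ring, sqrt_mul (by positivity), sqrt_sq zero_le_two, mul_comm]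

theorem casimir_force_reflecting_asymp (β : ℝ) (hβ : 0 < β) :
    Tendsto (fun L : ℝ =>
        (Real.sqrt (β/2) * (1 - Real.exp (-(L * Real.sqrt (2*β)))) / Real.sinh (L * Real.sqrt (2*β)))
          * Real.exp (L * Real.sqrt (2*β)))
      atTop (nhds (Real.sqrt (2*β))) ∧
    ∃ C : ℝ, 0 < C ∧
      Tendsto (fun L : ℝ =>
          (Real.sqrt (β/2) * (1 - Real.exp (-(L * Real.sqrt (2*β)))) / Real.sinh (L * Real.sqrt (2*β)))
            / Real.exp (-(L * Real.sqrt (2*β))))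
        atTop (nhds C) := by
  have hc : 0 < √(2 * β) := sqrt_pos.mpr (by positivity)
  have hx : Tendsto (fun L : ℝ => L * √(2 * β)) atTop atTop := tendsto_id.atTop_mul_const hc
  have hmain := (tendsto_one_sub_exp_neg_div_sinh_mul_exp.comp hx).const_mul √(β / 2)
  simp only [Function.comp_def, ← mul_assoc, ← mul_div_assoc, sqrt_div_two_mul_two] at hmain
  refine ⟨hmain, √(2 * β), hc, ?_⟩
  simpa only [div_eq_mul_inv, exp_neg, inv_inv] using hmain
end

section
/- For fixed β > 0, the function F^R(L) = √(β/2)·(1 − e^{−L√(2β)})/sinh(L√(2β)) is strictly decreasing in L on (0, ∞) and tends to 0 as L → ∞. -/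
/-! Since `1 - e^{-x} = e^{-x}(e^x - 1)` and `2 sinh x = e^{-x}(e^{2x} - 1)`, for `x ≠ 0` the ratio
`(1 - e^{-x}) / sinh x` collapses to `2 / (e^x + 1)`, which is strictly decreasing and tends to `0`.
The force is a positive multiple of this function evaluated at `L √(2β)`. -/

open Real Filter Set

lemma one_sub_exp_neg_div_sinh {x : ℝ} (hx : x ≠ 0) :
    (1 - exp (-x)) / sinh x = 2 / (exp x + 1) := by
  rw [div_eq_div_iff (sinh_ne_zero.mpr hx) (by positivity), sinh_eq]
  have : exp (-x) * exp x = 1 := by rw [← exp_add, neg_add_cancel, exp_zero]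
  linear_combination -this

lemma strictAnti_two_div_exp_add_one : StrictAnti fun x : ℝ => 2 / (exp x + 1) := by
  intro a b hab
  have := exp_lt_exp.mpr hab
  dsimp only
  gcongr

lemma tendsto_two_div_exp_add_one_atTop :
    Tendsto (fun x : ℝ => 2 / (exp x + 1)) atTop (nhds 0) :=
  tendsto_const_nhds.div_atTop (tendsto_exp_atTop.atTop_add tendsto_const_nhds)

theorem casimir_force_reflecting_decreasing (β : ℝ) (hβ : 0 < β) :
    StrictAntiOn
      (fun L : ℝ =>
        Real.sqrt (β/2) * (1 - Real.exp (-(L * Real.sqrt (2*β)))) / Real.sinh (L * Real.sqrt (2*β)))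
      (Ioi 0) ∧
    Tendsto
      (fun L : ℝ =>
        Real.sqrt (β/2) * (1 - Real.exp (-(L * Real.sqrt (2*β)))) / Real.sinh (L * Real.sqrt (2*β)))
      atTop (nhds 0) := by
  set s := √(2 * β)
  set c := √(β / 2)
  have hs : 0 < s := sqrt_pos.mpr (by positivity)
  have hc : 0 < c := sqrt_pos.mpr (by positivity)
  let g : ℝ → ℝ := fun L => c * (2 / (exp (L * s) + 1))
  have hforce : EqOn g (fun L => c * (1 - exp (-(L * s))) / sinh (L * s)) (Ioi 0) :=
    fun L hL => by
      simp only [g, mul_div_assoc, one_sub_exp_neg_div_sinh (mul_pos hL hs).ne']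
  constructor
  · exact ((strictAnti_two_div_exp_add_one.comp_strictMono (strictMono_mul_right_of_pos hs)).const_mul
      hc |>.strictAntiOn _).congr hforce
  · have hg : Tendsto g atTop (nhds 0) := by
      simpa using (tendsto_two_div_exp_add_one_atTop.comp
        (tendsto_id.atTop_mul_const hs)).const_mul c
    exact hg.congr' (eventually_gt_atTop 0 |>.mono hforce)
end

section
/- Let β > 0 and ρ(x) = −∫₀^∞ (2β e^{−4βu}/√(2πu)) · erf(x/√(2u)) du for x < 0. Then ρ(x) > 0 for all x < 0, and lim_{x→−∞} ρ(x) = √(β/2). -/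
open Real Set MeasureTheory Filter

noncomputable def erf (x : ℝ) : ℝ := (2 / Real.sqrt π) * ∫ t in (0:ℝ)..x, Real.exp (-t^2)

noncomputable def rhoHalf (β x : ℝ) : ℝ :=
  -∫ u in Ioi (0:ℝ),
    (2 * β * Real.exp (-(4*β*u)) / Real.sqrt (2*π*u)) * erf (x / Real.sqrt (2*u))

namespace HalflineAux

lemma gauss_intble : Integrable (fun t : ℝ => Real.exp (-t^2)) := by
  simpa [neg_mul, one_mul] using integrable_exp_neg_mul_sq (b := (1:ℝ)) one_pos

lemma int_Iic : ∫ t in Iic (0:ℝ), Real.exp (-t^2) = Real.sqrt π / 2 := by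
  have h1 : ∫ t in Ioi (0:ℝ), Real.exp (-(1:ℝ) * t^2) = Real.sqrt (π/1) / 2 :=
    integral_gaussian_Ioi 1
  have h2 : (∫ t in Ioi (0:ℝ), Real.exp (-(-t)^2)) = ∫ t in Iic (-(0:ℝ)), Real.exp (-t^2) :=
    integral_comp_neg_Ioi 0 (fun t => Real.exp (-t^2))
  simp only [neg_sq, neg_zero] at h2
  rw [← h2]
  simpa [neg_mul, one_mul] using h1

lemma erf_continuous : Continuous erf := by
  unfold erf
  exact continuous_const.mul
    (intervalIntegral.continuous_primitive (fun a b => gauss_intble.intervalIntegrable) 0)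

lemma sqrt_pi_pos : 0 < Real.sqrt π := Real.sqrt_pos.mpr Real.pi_pos

lemma erf_neg (x : ℝ) (hx : x < 0) : erf x < 0 := by
  unfold erf
  have h : (0:ℝ) < ∫ t in x..0, Real.exp (-t^2) :=
    intervalIntegral.intervalIntegral_pos_of_pos gauss_intble.intervalIntegrable
      (fun t => Real.exp_pos _) hx
  have hlt : (∫ t in (0:ℝ)..x, Real.exp (-t^2)) < 0 := by
    rw [intervalIntegral.integral_symm]; linarith
  have h2 : (0:ℝ) < 2 / Real.sqrt π := by positivity
  nlinarith

lemma erf_ge_neg_one (x : ℝ) (hx : x ≤ 0) : -1 ≤ erf x := by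
  unfold erf
  have hle : (∫ t in x..0, Real.exp (-t^2)) ≤ ∫ t in Iic (0:ℝ), Real.exp (-t^2) := by
    rw [intervalIntegral.integral_of_le hx]
    exact setIntegral_mono_set gauss_intble.integrableOn
      (Eventually.of_forall fun t => (Real.exp_pos _).le)
      (Eventually.of_forall fun t (ht : t ∈ Ioc x 0) => ht.2)
  rw [int_Iic] at hle
  have h : -(Real.sqrt π / 2) ≤ ∫ t in (0:ℝ)..x, Real.exp (-t^2) := by
    rw [intervalIntegral.integral_symm]; linarith
  have hπ := sqrt_pi_pos
  rw [show (-1 : ℝ) = (2 / Real.sqrt π) * (-(Real.sqrt π / 2)) by field_simp]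
  have h2 : (0:ℝ) ≤ 2 / Real.sqrt π := by positivity
  exact mul_le_mul_of_nonneg_left h h2

lemma erf_tendsto_atBot : Tendsto erf atBot (nhds (-1)) := by
  have h : Tendsto (fun x : ℝ => ∫ t in x..(0:ℝ), Real.exp (-t^2)) atBot
      (nhds (∫ t in Iic (0:ℝ), Real.exp (-t^2))) :=
    intervalIntegral_tendsto_integral_Iic 0 gauss_intble.integrableOn tendsto_id
  rw [int_Iic] at h
  have h2 : Tendsto (fun x : ℝ => (2 / Real.sqrt π) * -∫ t in x..(0:ℝ), Real.exp (-t^2))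
      atBot (nhds ((2 / Real.sqrt π) * -(Real.sqrt π / 2))) := (h.neg).const_mul _
  have hπ := sqrt_pi_pos
  have heq : (2 / Real.sqrt π) * -(Real.sqrt π / 2) = -1 := by field_simp
  rw [heq] at h2
  refine h2.congr fun x => ?_
  unfold erf
  rw [intervalIntegral.integral_symm, neg_neg]

/-- value and integrability of the density kernel. -/
lemma g_integral (β : ℝ) (hβ : 0 < β) :
    IntegrableOn (fun u => 2 * β * Real.exp (-(4*β*u)) / Real.sqrt (2*π*u)) (Ioi 0) ∧
    ∫ u in Ioi (0:ℝ), 2 * β * Real.exp (-(4*β*u)) / Real.sqrt (2*π*u) = Real.sqrt (β/2) := by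
  have hb : (0:ℝ) < 4*β := by linarith
  set f : ℝ → ℝ := fun x => Real.exp (-x) * x ^ (-(1/2) : ℝ) with hf
  have h12 : (1/2 : ℝ) - 1 = -(1/2) := by norm_num
  have hfint : IntegrableOn f (Ioi 0) := by
    have h := Real.GammaIntegral_convergent (s := 1/2) one_half_pos
    rw [h12] at h
    exact h
  have hfval : ∫ x in Ioi (0:ℝ), f x = Real.sqrt π := by
    have h := (Real.Gamma_eq_integral (s := 1/2) one_half_pos).symm
    rw [h12] at h
    rw [hf, h, Real.Gamma_one_half_eq]
  -- equality of integrands on Ioi 0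
  have key : ∀ u ∈ Ioi (0:ℝ),
      2 * β * Real.exp (-(4*β*u)) / Real.sqrt (2*π*u)
        = (2 * β * Real.sqrt (4*β) / Real.sqrt (2*π)) * f ((4*β) * u) := by
    intro u hu
    have hu0 : (0:ℝ) < u := hu
    have h1 : Real.sqrt (2*π*u) = Real.sqrt (2*π) * Real.sqrt u := by
      rw [← Real.sqrt_mul (by positivity)]
    have h2 : ((4*β) * u) ^ (-(1/2) : ℝ)
        = (Real.sqrt (4*β))⁻¹ * (Real.sqrt u)⁻¹ := by
      rw [Real.mul_rpow hb.le hu0.le, Real.rpow_neg hb.le, Real.rpow_neg hu0.le,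
        ← Real.sqrt_eq_rpow, ← Real.sqrt_eq_rpow]
    have hsb : (0:ℝ) < Real.sqrt (4*β) := Real.sqrt_pos.mpr hb
    have hsu : (0:ℝ) < Real.sqrt u := Real.sqrt_pos.mpr hu0
    have hsp : (0:ℝ) < Real.sqrt (2*π) := Real.sqrt_pos.mpr (by positivity)
    rw [hf]
    simp only [h1, h2]
    field_simp
  have hcomp : IntegrableOn (fun u => f ((4*β) * u)) (Ioi 0) := by
    have h := (integrableOn_Ioi_comp_mul_left_iff f 0 hb).mpr
    simp only [mul_zero] at h
    exact h hfint
  constructor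
  · have h := hcomp.const_mul (2 * β * Real.sqrt (4*β) / Real.sqrt (2*π))
    exact IntegrableOn.congr_fun h (fun u hu => (key u hu).symm) measurableSet_Ioi
  · rw [setIntegral_congr_fun measurableSet_Ioi key, MeasureTheory.integral_const_mul,
      MeasureTheory.integral_comp_mul_left_Ioi f 0 hb]
    simp only [mul_zero, hfval, smul_eq_mul]
    have hsb : Real.sqrt (4*β) = 2 * Real.sqrt β := by
      rw [show (4:ℝ)*β = 2^2 * β by ring, Real.sqrt_mul (by positivity), Real.sqrt_sq (by norm_num)]
    have hsp : Real.sqrt (2*π) = Real.sqrt 2 * Real.sqrt π := Real.sqrt_mul (by norm_num) _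
    have hb2 : Real.sqrt (β/2) = Real.sqrt β / Real.sqrt 2 := Real.sqrt_div hβ.le 2
    have hβs : (0:ℝ) < Real.sqrt β := Real.sqrt_pos.mpr hβ
    have h2s : (0:ℝ) < Real.sqrt 2 := by positivity
    have hπs := sqrt_pi_pos
    have hββ : Real.sqrt β * Real.sqrt β = β := Real.mul_self_sqrt hβ.le
    rw [hsb, hsp, hb2]
    field_simp
    nlinarith [hββ, hβs, h2s, hπs]

lemma meas_aux (β x : ℝ) :
    AEStronglyMeasurable
      (fun u => (2 * β * Real.exp (-(4*β*u)) / Real.sqrt (2*π*u)) * erf (x / Real.sqrt (2*u)))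
      (volume.restrict (Ioi 0)) := by
  refine ContinuousOn.aestronglyMeasurable ?_ measurableSet_Ioi
  have hsq : ContinuousOn (fun u : ℝ => Real.sqrt (2*π*u)) (Ioi 0) :=
    (Real.continuous_sqrt.comp (by continuity)).continuousOn
  have hsq2 : ContinuousOn (fun u : ℝ => Real.sqrt (2*u)) (Ioi 0) :=
    (Real.continuous_sqrt.comp (by continuity)).continuousOn
  refine ContinuousOn.mul ?_ ?_
  · refine ContinuousOn.div (by fun_prop) hsq ?_
    intro u hu
    have hu0 : (0:ℝ) < u := hu
    exact (Real.sqrt_pos.mpr (by positivity : (0:ℝ) < 2*π*u)).ne'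
  · refine erf_continuous.comp_continuousOn ?_
    refine ContinuousOn.div continuousOn_const hsq2 ?_
    intro u hu
    have hu0 : (0:ℝ) < u := hu
    exact (Real.sqrt_pos.mpr (by positivity : (0:ℝ) < 2*u)).ne'

lemma bound_aux (β x : ℝ) (hβ : 0 < β) (hx : x < 0) :
    ∀ᵐ u ∂(volume.restrict (Ioi (0:ℝ))),
      ‖(2 * β * Real.exp (-(4*β*u)) / Real.sqrt (2*π*u)) * erf (x / Real.sqrt (2*u))‖
        ≤ 2 * β * Real.exp (-(4*β*u)) / Real.sqrt (2*π*u) := by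
  filter_upwards [ae_restrict_mem measurableSet_Ioi] with u hu
  have hu0 : (0:ℝ) < u := hu
  have hg : (0:ℝ) ≤ 2 * β * Real.exp (-(4*β*u)) / Real.sqrt (2*π*u) := by positivity
  have hy : x / Real.sqrt (2*u) < 0 :=
    div_neg_of_neg_of_pos hx (Real.sqrt_pos.mpr (by positivity))
  have h1 : -1 ≤ erf (x / Real.sqrt (2*u)) := erf_ge_neg_one _ hy.le
  have h2 : erf (x / Real.sqrt (2*u)) < 0 := erf_neg _ hy
  rw [norm_mul, Real.norm_eq_abs, Real.norm_eq_abs, abs_of_nonneg hg]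
  have habs : |erf (x / Real.sqrt (2*u))| ≤ 1 := abs_le.mpr ⟨h1, by linarith⟩
  calc (2 * β * Real.exp (-(4*β*u)) / Real.sqrt (2*π*u)) * |erf (x / Real.sqrt (2*u))|
      ≤ (2 * β * Real.exp (-(4*β*u)) / Real.sqrt (2*π*u)) * 1 :=
        mul_le_mul_of_nonneg_left habs hg
    _ = _ := mul_one _

lemma intble_aux (β x : ℝ) (hβ : 0 < β) (hx : x < 0) :
    IntegrableOn
      (fun u => (2 * β * Real.exp (-(4*β*u)) / Real.sqrt (2*π*u)) * erf (x / Real.sqrt (2*u)))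
      (Ioi 0) :=
  Integrable.mono' (g_integral β hβ).1 (meas_aux β x) (bound_aux β x hβ hx)

end HalflineAux

open HalflineAux in
theorem halfline_density (β : ℝ) (hβ : 0 < β) :
    (∀ x : ℝ, x < 0 → 0 < rhoHalf β x) ∧
    Tendsto (fun x : ℝ => rhoHalf β x) atBot (nhds (Real.sqrt (β/2))) := by
  constructor
  · intro x hx
    unfold rhoHalf
    rw [← MeasureTheory.integral_neg]
    refine (setIntegral_pos_iff_support_of_nonneg_ae ?_ ?_).mpr ?_
    · filter_upwards [ae_restrict_mem measurableSet_Ioi] with u hu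
      have hu0 : (0:ℝ) < u := hu
      have hg : (0:ℝ) ≤ 2 * β * Real.exp (-(4*β*u)) / Real.sqrt (2*π*u) := by positivity
      have herf : erf (x / Real.sqrt (2*u)) < 0 :=
        erf_neg _ (div_neg_of_neg_of_pos hx (Real.sqrt_pos.mpr (by positivity)))
      have := mul_nonpos_of_nonneg_of_nonpos hg herf.le
      simpa using neg_nonneg.mpr this
    · exact (intble_aux β x hβ hx).neg
    · refine lt_of_lt_of_le ?_ (measure_mono (?_ :
        Ioi (0:ℝ) ⊆ Function.support (fun u =>
          -((2 * β * Real.exp (-(4*β*u)) / Real.sqrt (2*π*u)) * erf (x / Real.sqrt (2*u))))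
          ∩ Ioi 0))
      · rw [Real.volume_Ioi]
        exact ENNReal.zero_lt_top
      · intro u hu
        refine ⟨?_, hu⟩
        have hu0 : (0:ℝ) < u := hu
        have hg : (0:ℝ) < 2 * β * Real.exp (-(4*β*u)) / Real.sqrt (2*π*u) := by positivity
        have herf : erf (x / Real.sqrt (2*u)) < 0 :=
          erf_neg _ (div_neg_of_neg_of_pos hx (Real.sqrt_pos.mpr (by positivity)))
        exact (neg_pos.mpr (mul_neg_of_pos_of_neg hg herf)).ne'
  · have hg := g_integral β hβ
    have hlim : Tendsto (fun x : ℝ => ∫ u in Ioi (0:ℝ),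
        (2 * β * Real.exp (-(4*β*u)) / Real.sqrt (2*π*u)) * erf (x / Real.sqrt (2*u))) atBot
        (nhds (∫ u in Ioi (0:ℝ),
          -(2 * β * Real.exp (-(4*β*u)) / Real.sqrt (2*π*u)))) := by
      refine tendsto_integral_filter_of_dominated_convergence
        (fun u => 2 * β * Real.exp (-(4*β*u)) / Real.sqrt (2*π*u)) ?_ ?_ hg.1 ?_
      · exact Eventually.of_forall fun x => meas_aux β x
      · filter_upwards [eventually_lt_atBot (0:ℝ)] with x hx
        exact bound_aux β x hβ hx
      · filter_upwards [ae_restrict_mem measurableSet_Ioi] with u hu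
        have hu0 : (0:ℝ) < u := hu
        have h1 : Tendsto (fun x : ℝ => x / Real.sqrt (2*u)) atBot atBot :=
          tendsto_id.atBot_div_const (Real.sqrt_pos.mpr (by positivity))
        have h2 : Tendsto (fun x : ℝ => erf (x / Real.sqrt (2*u))) atBot (nhds (-1)) :=
          erf_tendsto_atBot.comp h1
        have h3 := h2.const_mul (2 * β * Real.exp (-(4*β*u)) / Real.sqrt (2*π*u))
        simpa using h3
    rw [MeasureTheory.integral_neg, hg.2] at hlim
    have h := hlim.neg
    rw [neg_neg] at h
    unfold rhoHalf
    exact h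
end

section
/- For fixed β > 0 and δ > 0, there exists a constant C > 0 such that for all L ≥ 1: |∫_δ^∞ (e^{−4L²βu}/u)(1 − θ²(0, i/(πu))) du| ≤ (C/L²) e^{−4L²βδ}, where θ(0, i/(πu)) = Σ_{n∈ℤ} e^{−n²/u}. -/
open Real Set MeasureTheory

/-! For `u > 0` the series is Jacobi's `θ` at `τ = i/(πu)`, and the bound
`‖θ τ - 1‖ ≤ 2q/(1-q)`, `q = e^{-1/u}`, gives `|θ - 1| ≤ 2u`. Hence `|1 - θ²|/u ≤ 4(1+u)` grows
at most like `e^{2βu}`. Absorbing `e^{2βu}` into the weight leaves `e^{-(4L²-2)βu}`, and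
`4L² - 2 ≥ 2L²` for `L ≥ 1`, so the tail integral is at most
`4(1 + 1/(2β)) e^{2βδ} e^{-4L²βδ} / (2βL²)`. -/

noncomputable def theta (u : ℝ) : ℝ := ∑' n : ℤ, rexp (-((n : ℝ) ^ 2 / u))

lemma ofReal_theta (u : ℝ) : (theta u : ℂ) = jacobiTheta (Complex.I / (π * u)) := by
  rw [theta, Complex.ofReal_tsum, jacobiTheta]
  refine tsum_congr fun n => ?_
  rw [Complex.ofReal_exp]
  congr 1
  push_cast
  field_simp
  rw [Complex.I_sq]
  ring

lemma exp_neg_div_one_sub_exp_neg_le {x : ℝ} (hx : 0 < x) :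
    rexp (-x) / (1 - rexp (-x)) ≤ 1 / x := by
  have hlt : rexp (-x) < 1 := exp_lt_one_iff.mpr (neg_lt_zero.mpr hx)
  rw [div_le_div_iff₀ (sub_pos.mpr hlt) hx]
  have hprod : rexp x * rexp (-x) = 1 := by rw [← exp_add, add_neg_cancel, exp_zero]
  nlinarith [add_one_le_exp x, exp_pos (-x)]

lemma abs_theta_sub_one_le {u : ℝ} (hu : 0 < u) :
    |theta u - 1| ≤ 2 * u := by
  have him : (Complex.I / (π * u)).im = 1 / (π * u) := by
    rw [← Complex.ofReal_mul, Complex.div_ofReal_im, Complex.I_im]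
  have hexponent : -π * (Complex.I / (π * u)).im = -(1 / u) := by
    rw [him]; field_simp
  have hθ := norm_jacobiTheta_sub_one_le (τ := Complex.I / (π * u)) (by rw [him]; positivity)
  rw [hexponent, ← ofReal_theta, ← Complex.ofReal_one, ← Complex.ofReal_sub,
    Complex.norm_real, Real.norm_eq_abs] at hθ
  calc _ ≤ 2 / (1 - rexp (-(1 / u))) * rexp (-(1 / u)) := hθ
    _ = 2 * (rexp (-(1 / u)) / (1 - rexp (-(1 / u)))) := by ring
    _ ≤ 2 * (1 / (1 / u)) := by
        gcongr 2 * ?_; exact exp_neg_div_one_sub_exp_neg_le (by positivity)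
    _ = 2 * u := by rw [one_div_one_div]

lemma abs_one_sub_sq_le {x t : ℝ} (h : |x - 1| ≤ t) : |1 - x ^ 2| ≤ t * (t + 2) := by
  have hx : |x + 1| ≤ t + 2 := by
    calc |x + 1| = |(x - 1) + 2| := by ring_nf
      _ ≤ |x - 1| + |(2 : ℝ)| := abs_add_le _ _
      _ ≤ t + 2 := by rw [abs_two]; linarith
  calc |1 - x ^ 2| = |x - 1| * |x + 1| := by rw [← abs_mul, ← abs_neg]; ring_nf
    _ ≤ t * (t + 2) := mul_le_mul h hx (abs_nonneg _) ((abs_nonneg _).trans h)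

lemma one_add_le_mul_exp {a u : ℝ} (ha : 0 < a) (hu : 0 ≤ u) :
    1 + u ≤ (1 + 1 / a) * rexp (a * u) := by
  have h1 : 1 ≤ rexp (a * u) := one_le_exp (by positivity)
  have h2 : u ≤ rexp (a * u) / a := by
    rw [le_div_iff₀ ha]; linarith [add_one_le_exp (a * u)]
  calc 1 + u ≤ rexp (a * u) + rexp (a * u) / a := add_le_add h1 h2
    _ = (1 + 1 / a) * rexp (a * u) := by ring

lemma abs_one_sub_theta_sq_div_le {a u : ℝ} (ha : 0 < a) (hu : 0 < u) :
    |(1 - theta u ^ 2) / u| ≤ 4 * (1 + 1 / a) * rexp (a * u) := by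
  have h := abs_one_sub_sq_le (abs_theta_sub_one_le hu)
  rw [abs_div, abs_of_pos hu, div_le_iff₀ hu]
  calc _ ≤ 2 * u * (2 * u + 2) := h
    _ = 4 * (1 + u) * u := by ring
    _ ≤ 4 * ((1 + 1 / a) * rexp (a * u)) * u := by gcongr; exact one_add_le_mul_exp ha hu.le
    _ = _ := by ring

lemma abs_setIntegral_Ioi_le_of_abs_le_exp {F : ℝ → ℝ} {B m δ : ℝ} (hm : 0 < m)
    (hF : ∀ u > δ, |F u| ≤ B * rexp (-m * u)) :
    |∫ u in Ioi δ, F u| ≤ B * rexp (-m * δ) / m := by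
  have hint : IntegrableOn (fun u => B * rexp (-m * u)) (Ioi δ) :=
    (exp_neg_integrableOn_Ioi δ hm).const_mul B
  have hbound : ∀ᵐ u ∂volume.restrict (Ioi δ), ‖F u‖ ≤ B * rexp (-m * u) :=
    (ae_restrict_iff' measurableSet_Ioi).mpr (.of_forall hF)
  calc |∫ u in Ioi δ, F u| ≤ ∫ u in Ioi δ, B * rexp (-m * u) :=
        norm_integral_le_of_norm_le hint hbound
    _ = B * rexp (-m * δ) / m := by
        rw [integral_const_mul, integral_exp_mul_Ioi (neg_lt_zero.mpr hm)]; ring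

theorem tail_integral_bound (β δ : ℝ) (hβ : 0 < β) (hδ : 0 < δ) :
    ∃ C : ℝ, 0 < C ∧ ∀ L : ℝ, 1 ≤ L →
      |∫ u in Ioi δ, (Real.exp (-(4*L^2*β*u)) / u)
          * (1 - (∑' n : ℤ, Real.exp (-((n:ℝ)^2 / u)))^2)|
        ≤ (C / L^2) * Real.exp (-(4*L^2*β*δ)) := by
  set A := 4 * (1 + 1 / (2 * β))
  refine ⟨A * rexp (2 * β * δ) / (2 * β), by positivity, fun L hL => ?_⟩
  set m := 4 * L ^ 2 * β - 2 * β with hm_def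
  have hm : 2 * β * L ^ 2 ≤ m := by nlinarith [one_le_pow₀ (n := 2) hL]
  have hpoint : ∀ u > δ,
      |rexp (-(4 * L ^ 2 * β * u)) / u * (1 - theta u ^ 2)| ≤ A * rexp (-m * u) := by
    intro u hu
    have hweight := abs_one_sub_theta_sq_div_le (mul_pos two_pos hβ) (hδ.trans hu)
    calc _ = rexp (-(4 * L ^ 2 * β * u)) * |(1 - theta u ^ 2) / u| := by
          rw [div_mul_eq_mul_div, mul_div_assoc, abs_mul, abs_of_pos (exp_pos _)]
      _ ≤ rexp (-(4 * L ^ 2 * β * u)) * (A * rexp (2 * β * u)) := by gcongr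
      _ = A * rexp (-m * u) := by rw [mul_left_comm, ← exp_add, hm_def]; ring_nf
  have hm_pos : 0 < m := lt_of_lt_of_le (by positivity) hm
  calc _ ≤ A * rexp (-m * δ) / m := abs_setIntegral_Ioi_le_of_abs_le_exp hm_pos hpoint
    _ ≤ A * rexp (-m * δ) / (2 * β * L ^ 2) := by gcongr
    _ = _ := by
        rw [show -m * δ = 2 * β * δ + -(4 * L ^ 2 * β * δ) by ring, exp_add]
        field_simp
end
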